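/- arXiv:1408.1261 — 3 statements merged into one kernel-verified Lean document; each statement's English description precedes it below -/
import Mathlib

section
/- Let f be an upper triangular n×n partial permutation matrix with dot set D = {(a, f(a)) : f(a) defined}, and let S ⊆ [n] with |S| = n − rank(f). Then for every interval [i,j] ⊆ [n] the inequality |[i,j] ∩ S| ≥ #{(a,b) ∈ D : i ≤ a ≤ b ≤ j} holds if and only if there exists an injective matching m : D → S such that a ≤ m(a,b) ≤ b for each (a,b) ∈ D. -/
/-!
By Hall's theorem it suffices that every set `A` of dots satisfies
`#A ≤ #(S ∩ ⋃_{p ∈ A} [p.1, p.2])`. Let `j` be the largest right endpoint in `A` and `[i, j]`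
the longest interval of the form `[p.1, j]`, `p ∈ A`, covered by that union. A dot not
starting in `[i, j]` must end before `i`, since otherwise it would extend that block further
left. The dots inside `[i, j]` are bounded by the interval inequality for `[i, j]`, those
ending before `i` by induction, and the two parts of `S` they use are disjoint.
-/

open Finset

variable {n : ℕ}

/-- The dots of a partial permutation `f : [n] ⇀ [n]`, as a finite set of pairs. -/
def dots (f : Fin n → Option (Fin n)) : Finset (Fin n × Fin n) :=
  Finset.univ.filter fun p => f p.1 = some p.2

/-- The rank of a partial permutation: the number of its dots. -/
def pRank (f : Fin n → Option (Fin n)) : ℕ :=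
  (Finset.univ.filter fun a => (f a).isSome).card

section IntervalHall

variable {α : Type*} [LinearOrder α] [LocallyFiniteOrder α]

theorem exists_Icc_subset_biUnion_Icc_separating (A : Finset (α × α)) (hA : ∀ p ∈ A, p.1 ≤ p.2)
    (hne : A.Nonempty) :
    ∃ i j, i ≤ j ∧ Icc i j ⊆ A.biUnion (fun p => Icc p.1 p.2) ∧ (∃ p ∈ A, i ≤ p.1 ∧ p.2 ≤ j) ∧
      ∀ p ∈ A, (i ≤ p.1 ∧ p.2 ≤ j) ∨ p.2 < i := by
  set T := A.biUnion fun p => Icc p.1 p.2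
  have hIcc_subset : ∀ p ∈ A, Icc p.1 p.2 ⊆ T := fun p hp =>
    subset_biUnion_of_mem (fun p : α × α => Icc p.1 p.2) hp
  obtain ⟨p₀, hp₀, hp₀max⟩ := A.exists_max_image Prod.snd hne
  set j := p₀.2
  set B := A.filter fun p => Icc p.1 j ⊆ T
  have hp₀B : p₀ ∈ B := mem_filter.2 ⟨hp₀, hIcc_subset p₀ hp₀⟩
  obtain ⟨q₀, hq₀, hq₀min⟩ := B.exists_min_image Prod.fst ⟨p₀, hp₀B⟩
  set i := q₀.1
  have hcover : Icc i j ⊆ T := (mem_filter.1 hq₀).2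
  refine ⟨i, j, (hq₀min p₀ hp₀B).trans (hA p₀ hp₀), hcover,
    ⟨p₀, hp₀, hq₀min p₀ hp₀B, le_rfl⟩, fun p hp => ?_⟩
  by_cases hpB : p ∈ B
  · exact .inl ⟨hq₀min p hpB, hp₀max p hp⟩
  refine .inr (not_le.1 fun hip => hpB (mem_filter.2 ⟨hp, fun x hx => ?_⟩))
  rw [mem_Icc] at hx
  rcases le_or_gt x p.2 with hxp | hpx
  · exact hIcc_subset p hp (mem_Icc.2 ⟨hx.1, hxp⟩)
  · exact hcover (mem_Icc.2 ⟨hip.trans hpx.le, hx.2⟩)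

theorem card_le_card_inter_biUnion_Icc (S : Finset α) (A : Finset (α × α))
    (hA : ∀ p ∈ A, p.1 ≤ p.2)
    (H : ∀ i j, i ≤ j → #(A.filter fun p => i ≤ p.1 ∧ p.2 ≤ j) ≤ #(S ∩ Icc i j)) :
    #A ≤ #(S ∩ A.biUnion fun p => Icc p.1 p.2) := by
  induction A using Finset.strongInduction with
  | _ A ih =>
  rcases A.eq_empty_or_nonempty with rfl | hne
  · simp
  obtain ⟨i, j, hij, hcover, ⟨p₀, hp₀, hp₀ij⟩, hsplit⟩ :=
    exists_Icc_subset_biUnion_Icc_separating A hA hne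
  set inside : α × α → Prop := fun p => i ≤ p.1 ∧ p.2 ≤ j
  set A₂ := A.filter fun p => ¬ inside p
  have hA₂ : A₂ ⊂ A := filter_ssubset.2 ⟨p₀, hp₀, not_not.2 hp₀ij⟩
  have hA₂_left : ∀ x ∈ A₂.biUnion (fun p => Icc p.1 p.2), x < i := by
    simp only [A₂, mem_biUnion, mem_filter, mem_Icc]
    rintro x ⟨p, ⟨hp, hpi⟩, -, hxp⟩
    exact hxp.trans_lt ((hsplit p hp).resolve_left hpi)
  have ih₂ := ih A₂ hA₂ (fun p hp => hA p (filter_subset _ _ hp)) fun i' j' hij' =>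
    (card_le_card (filter_subset_filter _ (filter_subset _ _))).trans (H i' j' hij')
  have hdisj : Disjoint (S ∩ Icc i j) (S ∩ A₂.biUnion fun p => Icc p.1 p.2) :=
    disjoint_left.2 fun x hx hx₂ =>
      (hA₂_left x (mem_inter.1 hx₂).2).not_ge (mem_Icc.1 (mem_inter.1 hx).2).1
  calc #A = #(A.filter inside) + #A₂ := (card_filter_add_card_filter_not _).symm
    _ ≤ #(S ∩ Icc i j) + #(S ∩ A₂.biUnion fun p => Icc p.1 p.2) := add_le_add (H i j hij) ih₂
    _ = #((S ∩ Icc i j) ∪ (S ∩ A₂.biUnion fun p => Icc p.1 p.2)) :=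
      (card_union_of_disjoint hdisj).symm
    _ ≤ #(S ∩ A.biUnion fun p => Icc p.1 p.2) := by
      refine card_le_card (union_subset (inter_subset_inter_left hcover) ?_)
      exact inter_subset_inter_left (biUnion_subset_biUnion_of_subset_left _ (filter_subset _ _))

theorem exists_injOn_of_card_filter_le (S : Finset α) (D : Finset (α × α))
    (hD : ∀ p ∈ D, p.1 ≤ p.2)
    (H : ∀ i j, i ≤ j → #(D.filter fun p => i ≤ p.1 ∧ p.2 ≤ j) ≤ #(S ∩ Icc i j)) :
    ∃ m : α × α → α, Set.InjOn m D ∧ ∀ p ∈ D, m p ∈ S ∧ p.1 ≤ m p ∧ m p ≤ p.2 := by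
  have hall (s : Finset D) : #s ≤ #(s.biUnion fun p => S ∩ Icc p.1.1 p.1.2) := by
    have hs := card_le_card_inter_biUnion_Icc S (s.image Subtype.val)
      (fun p hp => by obtain ⟨q, -, rfl⟩ := mem_image.1 hp; exact hD q q.2)
      fun i j hij => (card_le_card (filter_subset_filter _
        fun p hp => by obtain ⟨q, -, rfl⟩ := mem_image.1 hp; exact q.2)).trans (H i j hij)
    rwa [card_image_of_injective _ Subtype.val_injective, inter_biUnion, image_biUnion] at hs
  obtain ⟨g, hg_inj, hg⟩ := (all_card_le_biUnion_card_iff_exists_injective _).1 hall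
  refine ⟨fun p => if h : p ∈ D then g ⟨p, h⟩ else p.1, fun p hp q hq hpq => ?_, fun p hp => ?_⟩
  · simp only [Finset.mem_coe] at hp hq
    simp only [dif_pos hp, dif_pos hq] at hpq
    exact congrArg Subtype.val (hg_inj hpq)
  · simpa only [dif_pos hp, mem_inter, mem_Icc] using hg ⟨p, hp⟩

theorem card_filter_le_card_inter_Icc_iff_exists_injOn (S : Finset α) (D : Finset (α × α))
    (hD : ∀ p ∈ D, p.1 ≤ p.2) :
    (∀ i j, i ≤ j → #(D.filter fun p => i ≤ p.1 ∧ p.2 ≤ j) ≤ #(S ∩ Icc i j)) ↔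
      ∃ m : α × α → α, Set.InjOn m D ∧ ∀ p ∈ D, m p ∈ S ∧ p.1 ≤ m p ∧ m p ≤ p.2 := by
  refine ⟨exists_injOn_of_card_filter_le S D hD, ?_⟩
  rintro ⟨m, hm_inj, hm⟩ i j -
  refine card_le_card_of_injOn m (fun p hp => ?_) (hm_inj.mono fun p hp => (mem_filter.1 hp).1)
  obtain ⟨hpD, hip, hpj⟩ := mem_filter.1 hp
  obtain ⟨hmS, hpm, hmp⟩ := hm p hpD
  exact mem_inter.2 ⟨hmS, mem_Icc.2 ⟨hip.trans hpm, hmp.trans hpj⟩⟩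

end IntervalHall

theorem interval_inequalities_iff_matching_general
    (f : Fin n → Option (Fin n))
    (hupper : ∀ a b : Fin n, f a = some b → a ≤ b)
    (S : Finset (Fin n)) :
    (∀ i j : Fin n, i ≤ j →
        ((dots f).filter fun p => i ≤ p.1 ∧ p.2 ≤ j).card ≤
          (S ∩ Finset.Icc i j).card) ↔
    ∃ m : Fin n × Fin n → Fin n,
      Set.InjOn m (dots f) ∧
      ∀ p ∈ dots f, m p ∈ S ∧ p.1 ≤ m p ∧ m p ≤ p.2 :=
  card_filter_le_card_inter_Icc_iff_exists_injOn S (dots f) fun p hp =>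
    hupper p.1 p.2 (mem_filter.1 hp).2

/-- for an upper triangular partial permutation matrix `f` and a
subset `S` with `|S| = n − rank f`, the interval inequalities
`|[i,j] ∩ S| ≥ #{dots of f inside [i,j]²}` (for all intervals `[i,j]`) hold
iff there is an injective matching sending each dot `(a,b)` to an element
`m(a,b) ∈ S` with `a ≤ m(a,b) ≤ b`. -/
theorem interval_inequalities_iff_matching
    (f : Fin n → Option (Fin n))
    (hupper : ∀ a b : Fin n, f a = some b → a ≤ b)
    (hinj : ∀ a a' b : Fin n, f a = some b → f a' = some b → a = a')
    (S : Finset (Fin n)) (hS : S.card = n - pRank f) :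
    (∀ i j : Fin n, i ≤ j →
        ((dots f).filter fun p => i ≤ p.1 ∧ p.2 ≤ j).card ≤
          (S ∩ Finset.Icc i j).card) ↔
    ∃ m : Fin n × Fin n → Fin n,
      Set.InjOn m (dots f) ∧
      ∀ p ∈ dots f, m p ∈ S ∧ p.1 ≤ m p ∧ m p ≤ p.2 :=
  interval_inequalities_iff_matching_general f hupper S
end

section
/- Suppose each dot (a,b) ∈ D requires a groom of height in the interval [a,b], and the groom set S fails Hall's condition (so some set B ⊆ D of brides has fewer than |B| acceptable grooms in S). Then there exists a single interval [a,b] ⊆ [n] such that |S ∩ [a,b]| < #{(x,y) ∈ D : a ≤ x ≤ y ≤ b}. -/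
/-!
Hall's theorem turns the failure of a matching into a deficient set `B` of dots: the grooms of
`S` acceptable to some dot of `B` are fewer than `|B|`. Among the deficient sets take one with
`|B|` minimal, and let `[a, b]` be the hull of its intervals. If some point `g ∈ [a, b]` lies in
no interval of `B`, then `g` cuts `B` into the dots left of `g` and the dots right of `g`; both
parts are proper, their acceptable grooms are disjoint, so one of them is already deficient.
Otherwise the intervals of `B` cover `[a, b]`, all grooms of `S ∩ [a, b]` are acceptable to `B`,
and `|S ∩ [a, b]| < |B|` while every dot of `B` lies in `[a, b]`.
-/

open Finset

namespace Finset

theorem exists_injOn_of_card_le_card_biUnion {ι β : Type*} [DecidableEq β] [Nonempty β]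
    (t : ι → Finset β) (D : Finset ι) (hall : ∀ B ⊆ D, #B ≤ #(B.biUnion t)) :
    ∃ f : ι → β, Set.InjOn f D ∧ ∀ i ∈ D, f i ∈ t i := by
  classical
  have hall_subtype : ∀ s : Finset D, #s ≤ #(s.biUnion fun i => t i) := fun s => by
    simpa [card_image_of_injective s Subtype.val_injective, image_biUnion] using
      hall (s.image Subtype.val) (fun _ => by simp +contextual)
  obtain ⟨f, hf_inj, hf_mem⟩ :=
    (all_card_le_biUnion_card_iff_existsInjective' _).mp hall_subtype
  refine ⟨fun i => if hi : i ∈ D then f ⟨i, hi⟩ else Classical.arbitrary β, ?_, ?_⟩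
  · intro i hi j hj hij
    simp only [mem_coe] at hi hj
    simp only [dif_pos hi, dif_pos hj] at hij
    exact congrArg Subtype.val (hf_inj hij)
  · intro i hi
    simpa [dif_pos hi] using hf_mem ⟨i, hi⟩

variable {α : Type*} [LinearOrder α] [LocallyFiniteOrder α]

def acceptableGrooms (S : Finset α) (B : Finset (α × α)) : Finset α :=
  B.biUnion fun p => S ∩ Icc p.1 p.2

variable {S : Finset α} {B B₁ B₂ : Finset (α × α)}

theorem mem_acceptableGrooms {x : α} :
    x ∈ acceptableGrooms S B ↔ x ∈ S ∧ ∃ p ∈ B, p.1 ≤ x ∧ x ≤ p.2 := by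
  simp only [acceptableGrooms, mem_biUnion, mem_inter, mem_Icc]
  tauto

theorem acceptableGrooms_union :
    acceptableGrooms S (B₁ ∪ B₂) = acceptableGrooms S B₁ ∪ acceptableGrooms S B₂ :=
  union_biUnion

theorem disjoint_acceptableGrooms (h : ∀ p ∈ B₁, ∀ q ∈ B₂, p.2 < q.1) :
    Disjoint (acceptableGrooms S B₁) (acceptableGrooms S B₂) := by
  refine disjoint_left.mpr fun x hx₁ hx₂ => ?_
  obtain ⟨-, p, hp, -, hxp⟩ := mem_acceptableGrooms.mp hx₁
  obtain ⟨-, q, hq, hqx, -⟩ := mem_acceptableGrooms.mp hx₂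
  exact (hxp.trans_lt ((h p hp q hq).trans_le hqx)).false

theorem exists_ssubset_card_acceptableGrooms_lt_of_gap {g : α} {p₀ p₁ : α × α}
    (hgap : ∀ p ∈ B, p.1 ≤ g → p.2 < g) (hp₀ : p₀ ∈ B) (hp₀g : p₀.1 ≤ g)
    (hp₁ : p₁ ∈ B) (hp₁g : g ≤ p₁.2) (hB : #(acceptableGrooms S B) < #B) :
    ∃ B' ⊂ B, #(acceptableGrooms S B') < #B' := by
  set L := B.filter fun p => p.2 < g
  set R := B.filter fun p => ¬ p.2 < g
  have hR : ∀ q ∈ R, g < q.1 := fun q hq =>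
    lt_of_not_ge fun hqg => (mem_filter.mp hq).2 (hgap q (mem_filter.mp hq).1 hqg)
  have hdisj : Disjoint (acceptableGrooms S L) (acceptableGrooms S R) :=
    disjoint_acceptableGrooms fun p hp q hq => (mem_filter.mp hp).2.trans (hR q hq)
  have hgrooms :
      #(acceptableGrooms S L) + #(acceptableGrooms S R) = #(acceptableGrooms S B) := by
    rw [← card_union_of_disjoint hdisj, ← acceptableGrooms_union, filter_union_filter_not_eq]
  have hcard : #L + #R = #B := card_filter_add_card_filter_not _
  by_cases hL : #(acceptableGrooms S L) < #L
  · exact ⟨L, filter_ssubset.mpr ⟨p₁, hp₁, hp₁g.not_gt⟩, hL⟩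
  · have hR_ssubset : R ⊂ B :=
      filter_ssubset.mpr ⟨p₀, hp₀, not_not.mpr (hgap p₀ hp₀ hp₀g)⟩
    exact ⟨R, hR_ssubset, by omega⟩

theorem exists_card_inter_Icc_lt_of_card_acceptableGrooms_lt (hB : ∀ p ∈ B, p.1 ≤ p.2)
    (hdef : #(acceptableGrooms S B) < #B) :
    ∃ a b : α, a ≤ b ∧ #(S ∩ Icc a b) < #(B.filter fun p => a ≤ p.1 ∧ p.2 ≤ b) := by
  induction B using strongInduction with
  | H B ih =>
  have hne : B.Nonempty := card_pos.mp ((Nat.zero_le _).trans_lt hdef)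
  obtain ⟨p₀, hp₀, hmin⟩ := B.exists_min_image Prod.fst hne
  obtain ⟨p₁, hp₁, hmax⟩ := B.exists_max_image Prod.snd ⟨p₀, hp₀⟩
  by_cases hcov : ∀ g ∈ Icc p₀.1 p₁.2, ∃ p ∈ B, p.1 ≤ g ∧ g ≤ p.2
  · refine ⟨p₀.1, p₁.2, (hB p₀ hp₀).trans (hmax p₀ hp₀), ?_⟩
    have hS : S ∩ Icc p₀.1 p₁.2 ⊆ acceptableGrooms S B := fun x hx =>
      mem_acceptableGrooms.mpr ⟨(mem_inter.mp hx).1, hcov x (mem_inter.mp hx).2⟩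
    have hfilter : B ⊆ B.filter fun p => p₀.1 ≤ p.1 ∧ p.2 ≤ p₁.2 := fun p hp =>
      mem_filter.mpr ⟨hp, hmin p hp, hmax p hp⟩
    calc #(S ∩ Icc p₀.1 p₁.2) ≤ #(acceptableGrooms S B) := card_le_card hS
      _ < #B := hdef
      _ ≤ _ := card_le_card hfilter
  · push Not at hcov
    obtain ⟨g, hg, hgap⟩ := hcov
    obtain ⟨B', hB'B, hB'⟩ := exists_ssubset_card_acceptableGrooms_lt_of_gap hgap
      hp₀ (mem_Icc.mp hg).1 hp₁ (mem_Icc.mp hg).2 hdef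
    obtain ⟨a, b, hab, hlt⟩ := ih B' hB'B (fun p hp => hB p (hB'B.subset hp)) hB'
    exact ⟨a, b, hab, hlt.trans_le (card_le_card (filter_subset_filter _ hB'B.subset))⟩

end Finset

theorem unmarriable_witnessed_by_interval_general {n : ℕ}
    (D : Finset (Fin n × Fin n)) (hD : ∀ p ∈ D, p.1 ≤ p.2)
    (S : Finset (Fin n))
    (hfail : ¬ ∃ m : Fin n × Fin n → Fin n,
        Set.InjOn m D ∧ ∀ p ∈ D, m p ∈ S ∧ p.1 ≤ m p ∧ m p ≤ p.2) :
    ∃ a b : Fin n, a ≤ b ∧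
      (S ∩ Finset.Icc a b).card <
        (D.filter fun p => a ≤ p.1 ∧ p.2 ≤ b).card := by
  cases isEmpty_or_nonempty (Fin n)
  · exact (hfail ⟨Prod.fst, fun p => isEmptyElim p.1, fun p => isEmptyElim p.1⟩).elim
  obtain ⟨B, hBD, hB⟩ : ∃ B ⊆ D, #(acceptableGrooms S B) < #B := by
    by_contra! hall
    obtain ⟨m, hm_inj, hm⟩ := exists_injOn_of_card_le_card_biUnion _ D hall
    exact hfail ⟨m, hm_inj, fun p hp => by simpa using hm p hp⟩
  obtain ⟨a, b, hab, hlt⟩ :=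
    exists_card_inter_Icc_lt_of_card_acceptableGrooms_lt (fun p hp => hD p (hBD hp)) hB
  exact ⟨a, b, hab, hlt.trans_le (card_le_card (filter_subset_filter _ hBD))⟩

/-- if the brides `D` (each dot `(a,b)` accepting only grooms of
height in `[a,b]`) cannot all be married off injectively into the groom set `S`
(with `|S| = |D|`), then the failure is witnessed by a single interval `[a,b]`:
`|S ∩ [a,b]| < #{(x,y) ∈ D : a ≤ x ≤ y ≤ b}`. -/
theorem unmarriable_witnessed_by_interval {n : ℕ}
    (D : Finset (Fin n × Fin n)) (hD : ∀ p ∈ D, p.1 ≤ p.2)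
    (S : Finset (Fin n)) (hcard : S.card = D.card)
    (hfail : ¬ ∃ m : Fin n × Fin n → Fin n,
        Set.InjOn m D ∧ ∀ p ∈ D, m p ∈ S ∧ p.1 ≤ m p ∧ m p ≤ p.2) :
    ∃ a b : Fin n, a ≤ b ∧
      (S ∩ Finset.Icc a b).card <
        (D.filter fun p => a ≤ p.1 ∧ p.2 ≤ b).card :=
  unmarriable_witnessed_by_interval_general D hD S hfail
end

section
/- Let J be a bounded juggling pattern of length n and ball number k, i.e. a bijection J : ℤ → ℤ with J(i+n) = J(i)+n and i ≤ J(i) ≤ i+n for all i. Let f be the restriction of J to the triangle 1 ≤ i ≤ J(i) ≤ n (an upper triangular partial permutation of rank n−k). Then J is uniquely determined by f together with the requirement that the remaining k dots of J (those with n < J(i) ≤ i+n, 1 ≤ i ≤ n) are arranged Northwest/Southeast, i.e. i < i' implies J(i) < J(i') among those dots. -/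
/-!
On the dots `1 ≤ i ≤ n` the pattern is fixed by `f` wherever `J i ≤ n`. The remaining dots
are exactly those `i ∈ [1, n]` with `J i > n`, and their values are the `v ∈ (n, 2n]` such that
`v - n` is not hit by `J` on `[1, n]`; since such a `v - n` can only be hit by a dot of `f`,
both this set of positions and this set of values are determined by `f`. An order-preserving
bijection between two finite sets of integers is unique, so the NW/SE condition fixes `J` on
`[1, n]`, hence everywhere because `J i - i` is `n`-periodic.
-/

/-- A bounded juggling pattern of length `n`: a bijection `J : ℤ → ℤ` with
`J(i+n) = J(i)+n` and `i ≤ J(i) ≤ i+n` for all `i`. -/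
structure BoundedJugglingPattern (n : ℕ) where
  J : ℤ → ℤ
  bij : Function.Bijective J
  periodic : ∀ i : ℤ, J (i + n) = J i + n
  lower : ∀ i : ℤ, i ≤ J i
  upper : ∀ i : ℤ, J i ≤ i + n

open Set

theorem StrictMonoOn.eqOn_of_image_eq {α β : Type*} [LinearOrder α] [Preorder β]
    {f g : α → β} {s : Set α} (hs : s.Finite) (hf : StrictMonoOn f s) (hg : StrictMonoOn g s)
    (h : f '' s = g '' s) : EqOn f g s := by
  have : Finite s := hs.to_subtype
  have hrange : range (s.domRestrict f) = range (s.domRestrict g) := by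
    rw [range_domRestrict, range_domRestrict, h]
  intro x hx
  exact congrFun ((strictMono_domRestrict.mpr hf).range_inj (strictMono_domRestrict.mpr hg)
    |>.mp hrange) ⟨x, hx⟩

theorem Function.Periodic.eq_of_eqOn_Ioc {α β : Type*} [AddCommGroup α] [LinearOrder α]
    [IsOrderedAddMonoid α] [Archimedean α] {f g : α → β} {c : α} (hc : 0 < c)
    (hf : Function.Periodic f c) (hg : Function.Periodic g c) (a : α)
    (h : EqOn f g (Ioc a (a + c))) : f = g := by
  funext x
  rw [← hf.sub_zsmul_eq (toIocDiv hc a x), ← hg.sub_zsmul_eq (toIocDiv hc a x),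
    self_sub_toIocDiv_zsmul]
  exact h (toIocMod_mem_Ioc hc a x)

namespace BoundedJugglingPattern

variable {n : ℕ} (J : BoundedJugglingPattern n)

theorem periodic_sub_id : Function.Periodic (fun i => J.J i - i) (n : ℤ) := by
  intro i
  simp only [J.periodic]
  ring

def outerDots : Set ℤ := {i | 1 ≤ i ∧ i ≤ n ∧ (n : ℤ) < J.J i}

theorem outerDots_finite : J.outerDots.Finite :=
  (finite_Icc (1 : ℤ) n).subset fun _ hi => ⟨hi.1, hi.2.1⟩

theorem mem_image_outerDots_iff (v : ℤ) :
    v ∈ J.J '' J.outerDots ↔ v ∈ Ioc (n : ℤ) (2 * n) ∧ ∀ i ∈ Icc (1 : ℤ) n, J.J i ≠ v - n := by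
  constructor
  · rintro ⟨j, ⟨hj1, hjn, hjv⟩, rfl⟩
    refine ⟨⟨hjv, by linarith [J.upper j]⟩, fun i hi hiv => ?_⟩
    have : i + n = j := J.bij.injective (by rw [J.periodic, hiv]; ring)
    linarith [hi.1]
  · rintro ⟨⟨hnv, hv⟩, hnot⟩
    obtain ⟨j, hj⟩ := J.bij.surjective (v - n)
    have hj0 : j ≤ 0 := by
      by_contra! hpos
      exact hnot j ⟨hpos, by linarith [J.lower j]⟩ hj
    have hjv : J.J (j + n) = v := by rw [J.periodic, hj]; ring
    exact ⟨j + n, ⟨by linarith [J.upper j], by linarith, by rw [hjv]; exact hnv⟩, hjv⟩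

theorem strictMonoOn_outerDots
    (h : ∀ i i' : ℤ, 1 ≤ i → i < i' → i' ≤ n → n < J.J i → n < J.J i' → J.J i < J.J i') :
    StrictMonoOn J.J J.outerDots :=
  fun i hi _ hi' hii' => h i _ hi.1 hii' hi'.2.1 hi.2.2 hi'.2.2

/-- `J₁` and `J₂` have the same partial permutation `f`. -/
def EqOnTriangle (J₁ J₂ : BoundedJugglingPattern n) : Prop :=
  ∀ i : ℤ, 1 ≤ i → i ≤ n → (J₁.J i ≤ n ↔ J₂.J i ≤ n) ∧ (J₁.J i ≤ n → J₁.J i = J₂.J i)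

variable {J₁ J₂ : BoundedJugglingPattern n}

theorem EqOnTriangle.outerDots_eq (h : EqOnTriangle J₁ J₂) : J₁.outerDots = J₂.outerDots := by
  ext i
  simp only [outerDots, mem_ofPred_eq]
  constructor
  · rintro ⟨hi1, hin, hJ⟩
    exact ⟨hi1, hin, lt_of_not_ge fun hle => hJ.not_ge ((h i hi1 hin).1.mpr hle)⟩
  · rintro ⟨hi1, hin, hJ⟩
    exact ⟨hi1, hin, lt_of_not_ge fun hle => hJ.not_ge ((h i hi1 hin).1.mp hle)⟩

theorem EqOnTriangle.image_outerDots_eq (h : EqOnTriangle J₁ J₂) :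
    J₁.J '' J₁.outerDots = J₂.J '' J₂.outerDots := by
  ext v
  rw [J₁.mem_image_outerDots_iff, J₂.mem_image_outerDots_iff]
  refine and_congr_right fun hv => forall₂_congr fun i hi => not_congr ?_
  have hvn : v - n ≤ n := by linarith [hv.2]
  obtain ⟨hiff, heq⟩ := h i hi.1 hi.2
  constructor
  · intro h₁
    rw [← heq (h₁ ▸ hvn), h₁]
  · intro h₂
    rw [heq (hiff.mpr (h₂ ▸ hvn)), h₂]

end BoundedJugglingPattern

/-- uniqueness: a bounded juggling pattern `J` is uniquely
determined by its restriction `f` to the triangle `1 ≤ i ≤ J(i) ≤ n`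
(an upper triangular partial permutation) together with the requirement that
the remaining dots (those with `n < J(i) ≤ i+n` for `1 ≤ i ≤ n`) are arranged
Northwest/Southeast. -/
theorem juggling_pattern_unique (n : ℕ) (hn : 0 < n)
    (J₁ J₂ : BoundedJugglingPattern n)
    -- both have the same partial permutation `f` on the triangle:
    (hsame : ∀ i : ℤ, 1 ≤ i → i ≤ n →
      (J₁.J i ≤ n ↔ J₂.J i ≤ n) ∧ (J₁.J i ≤ n → J₁.J i = J₂.J i))
    -- the dots of `J₁` outside the triangle run NW/SE:
    (hNWSE₁ : ∀ i i' : ℤ, 1 ≤ i → i < i' → i' ≤ n →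
      n < J₁.J i → n < J₁.J i' → J₁.J i < J₁.J i')
    -- the dots of `J₂` outside the triangle run NW/SE:
    (hNWSE₂ : ∀ i i' : ℤ, 1 ≤ i → i < i' → i' ≤ n →
      n < J₂.J i → n < J₂.J i' → J₂.J i < J₂.J i') :
    J₁.J = J₂.J := by
  have htri : J₁.EqOnTriangle J₂ := hsame
  have houter : EqOn J₁.J J₂.J J₁.outerDots := by
    refine StrictMonoOn.eqOn_of_image_eq J₁.outerDots_finite (J₁.strictMonoOn_outerDots hNWSE₁)
      ?_ ?_
    · rw [htri.outerDots_eq]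
      exact J₂.strictMonoOn_outerDots hNWSE₂
    · rw [htri.image_outerDots_eq, htri.outerDots_eq]
  have hsub : (fun i => J₁.J i - i) = fun i => J₂.J i - i := by
    refine J₁.periodic_sub_id.eq_of_eqOn_Ioc (by exact_mod_cast hn) J₂.periodic_sub_id 0 ?_
    rintro i ⟨hi0, hin⟩
    by_cases hle : J₁.J i ≤ n
    · simp only [(hsame i hi0 (by simpa using hin)).2 hle]
    · simp only [houter ⟨hi0, by simpa using hin, not_le.mp hle⟩]
  funext i
  simpa using congrFun hsub i
end
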